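/- Let f₁, …, f_N : ℝⁿ → ℝ be differentiable, with each fᵢ being Lᵢ-smooth, and let L_max = maxᵢ Lᵢ > 0. Let f = (1/N) Σᵢ fᵢ and suppose x* is a global minimizer of f that is also a global minimizer of each fᵢ (minimizer interpolation). Then, writing f* = f(x*), for all x ∈ ℝⁿ: (1/N) Σᵢ ‖∇fᵢ(x)‖² ≤ 2 L_max (f(x) − f*). -/

import Mathlib

/-! Each `fᵢ` is `L_max`-smooth and minimized at `x*`, so the descent lemma at the gradient step
`x - L_max⁻¹ ∇fᵢ x` gives `‖∇fᵢ x‖² ≤ 2 L_max (fᵢ x - fᵢ x*)`; averaging over `i` gives the claim. -/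

open Set

section Smooth

variable {E : Type*} [NormedAddCommGroup E] [InnerProductSpace ℝ E] [CompleteSpace E]
  {φ : E → ℝ} {L : ℝ}

theorem HasGradientAt.hasDerivAt_comp_add_smul {g x v : E} {t : ℝ}
    (h : HasGradientAt φ g (x + t • v)) :
    HasDerivAt (fun s : ℝ => φ (x + s • v)) (inner ℝ g v) t := by
  have hline : HasDerivAt (fun s : ℝ => x + s • v) v t := by
    simpa using ((hasDerivAt_id t).smul_const v).const_add x
  have hcomp : HasDerivAt (fun s : ℝ => φ (x + s • v)) _ t :=
    h.hasFDerivAt.comp_hasDerivAt t hline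
  simpa [InnerProductSpace.toDual_apply_apply] using hcomp

theorem inner_gradient_add_smul_sub_le
    (hL : ∀ y z : E, ‖gradient φ y - gradient φ z‖ ≤ L * ‖y - z‖) (x v : E) {t : ℝ}
    (ht : 0 ≤ t) :
    inner ℝ (gradient φ (x + t • v)) v - inner ℝ (gradient φ x) v ≤ L * ‖v‖ ^ 2 * t := by
  rw [← inner_sub_left]
  calc inner ℝ (gradient φ (x + t • v) - gradient φ x) v
      ≤ ‖gradient φ (x + t • v) - gradient φ x‖ * ‖v‖ := real_inner_le_norm _ _
    _ ≤ L * ‖x + t • v - x‖ * ‖v‖ := by gcongr; exact hL _ _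
    _ = L * ‖v‖ ^ 2 * t := by
      rw [add_sub_cancel_left, norm_smul, Real.norm_of_nonneg ht]; ring

theorem le_add_inner_gradient_add_sq_of_lipschitz_gradient (hφ : Differentiable ℝ φ)
    (hL : ∀ y z : E, ‖gradient φ y - gradient φ z‖ ≤ L * ‖y - z‖) (x y : E) :
    φ y ≤ φ x + inner ℝ (gradient φ x) (y - x) + L / 2 * ‖y - x‖ ^ 2 := by
  set v := y - x
  -- `F 1 ≤ F 0` is the claim, and `F' ≤ 0` on `[0, 1]` by the Lipschitz bound on the gradient.
  set F : ℝ → ℝ := fun t => φ (x + t • v) - t * inner ℝ (gradient φ x) v - L / 2 * ‖v‖ ^ 2 * t ^ 2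
  have hF : ∀ t, HasDerivAt F (inner ℝ (gradient φ (x + t • v)) v - inner ℝ (gradient φ x) v
      - L * ‖v‖ ^ 2 * t) t := by
    intro t
    have hquad := (hasDerivAt_pow 2 t).const_mul (L / 2 * ‖v‖ ^ 2)
    refine ((((hφ _).hasGradientAt.hasDerivAt_comp_add_smul).sub
      ((hasDerivAt_id t).mul_const (inner ℝ (gradient φ x) v))).sub hquad).congr_deriv ?_
    norm_num; ring
  have hF_anti : AntitoneOn F (Icc 0 1) := by
    refine antitoneOn_of_deriv_nonpos (convex_Icc 0 1)
      (fun t _ => (hF t).continuousAt.continuousWithinAt)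
      (fun t _ => (hF t).differentiableAt.differentiableWithinAt) fun t ht => ?_
    rw [interior_Icc] at ht
    rw [(hF t).deriv]
    linarith [inner_gradient_add_smul_sub_le hL x v ht.1.le]
  have h01 := hF_anti (left_mem_Icc.2 zero_le_one) (right_mem_Icc.2 zero_le_one) zero_le_one
  simp only [F, v, one_smul, add_sub_cancel, zero_smul, add_zero] at h01
  linarith

theorem sq_norm_gradient_le_of_lipschitz_gradient (hφ : Differentiable ℝ φ) (hL₀ : 0 < L)
    (hL : ∀ y z : E, ‖gradient φ y - gradient φ z‖ ≤ L * ‖y - z‖) {xstar : E}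
    (hmin : ∀ y, φ xstar ≤ φ y) (x : E) :
    ‖gradient φ x‖ ^ 2 ≤ 2 * L * (φ x - φ xstar) := by
  have hstep : φ (x - L⁻¹ • gradient φ x) ≤ φ x - ‖gradient φ x‖ ^ 2 / (2 * L) := by
    have h := le_add_inner_gradient_add_sq_of_lipschitz_gradient hφ hL x (x - L⁻¹ • gradient φ x)
    rw [sub_sub_cancel_left, inner_neg_right, real_inner_smul_right, real_inner_self_eq_norm_sq,
      norm_neg, norm_smul, Real.norm_of_nonneg (inv_nonneg.2 hL₀.le)] at h
    convert h using 1
    field_simp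
    ring
  have hdecrease := (hmin _).trans hstep
  rw [← div_le_iff₀' (by positivity)]
  linarith

end Smooth

theorem minimizer_interpolation_implies_wgc_general
    (n N : ℕ) (f_ : Fin N → (EuclideanSpace ℝ (Fin n) → ℝ))
    (L : Fin N → ℝ)
    (hdiff : ∀ i, Differentiable ℝ (f_ i))
    (hlip : ∀ i, ∀ y z : EuclideanSpace ℝ (Fin n),
      ‖gradient (f_ i) y - gradient (f_ i) z‖ ≤ L i * ‖y - z‖)
    (Lmax : ℝ) (hLmax : IsGreatest (Set.range L) Lmax) (hLmaxpos : 0 < Lmax)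
    (f : EuclideanSpace ℝ (Fin n) → ℝ)
    (hf : ∀ x, f x = (1 / (N : ℝ)) * ∑ i, f_ i x)
    (xstar : EuclideanSpace ℝ (Fin n))
    (hinterp : ∀ i, ∀ y, f_ i xstar ≤ f_ i y) :
    ∀ x, (1 / (N : ℝ)) * ∑ i, ‖gradient (f_ i) x‖ ^ 2 ≤ 2 * Lmax * (f x - f xstar) := by
  intro x
  have hlip_max : ∀ i, ∀ y z : EuclideanSpace ℝ (Fin n),
      ‖gradient (f_ i) y - gradient (f_ i) z‖ ≤ Lmax * ‖y - z‖ := fun i y z =>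
    (hlip i y z).trans (by gcongr; exact hLmax.2 ⟨i, rfl⟩)
  have hterm : ∀ i, ‖gradient (f_ i) x‖ ^ 2 ≤ 2 * Lmax * (f_ i x - f_ i xstar) := fun i =>
    sq_norm_gradient_le_of_lipschitz_gradient (hdiff i) hLmaxpos (hlip_max i) (hinterp i) x
  calc (1 / (N : ℝ)) * ∑ i, ‖gradient (f_ i) x‖ ^ 2
      ≤ (1 / (N : ℝ)) * ∑ i, 2 * Lmax * (f_ i x - f_ i xstar) := by
        gcongr with i; exact hterm i
    _ = 2 * Lmax * (f x - f xstar) := by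
        rw [hf x, hf xstar, ← mul_sub, ← Finset.sum_sub_distrib, ← Finset.mul_sum]
        ring

/-- Minimizer interpolation with componentwise smoothness implies the WGC
with ρL = L_max. -/
theorem minimizer_interpolation_implies_wgc
    (n N : ℕ) (hN : 0 < N) (f_ : Fin N → (EuclideanSpace ℝ (Fin n) → ℝ))
    (L : Fin N → ℝ)
    (hdiff : ∀ i, Differentiable ℝ (f_ i))
    (hlip : ∀ i, ∀ y z : EuclideanSpace ℝ (Fin n),
      ‖gradient (f_ i) y - gradient (f_ i) z‖ ≤ L i * ‖y - z‖)
    (Lmax : ℝ) (hLmax : IsGreatest (Set.range L) Lmax) (hLmaxpos : 0 < Lmax)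
    (f : EuclideanSpace ℝ (Fin n) → ℝ)
    (hf : ∀ x, f x = (1 / (N : ℝ)) * ∑ i, f_ i x)
    (xstar : EuclideanSpace ℝ (Fin n))
    (hmin : ∀ y, f xstar ≤ f y)
    (hinterp : ∀ i, ∀ y, f_ i xstar ≤ f_ i y) :
    ∀ x, (1 / (N : ℝ)) * ∑ i, ‖gradient (f_ i) x‖ ^ 2 ≤ 2 * Lmax * (f x - f xstar) :=
  minimizer_interpolation_implies_wgc_general n N f_ L hdiff hlip Lmax hLmax hLmaxpos f hf xstar
    hinterp
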